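/- arXiv:2308.15385 — 4 statements merged into one kernel-verified Lean document; each statement's English description precedes it below -/
import Mathlib

section
/- For an even natural number m ≥ 2 and an integer k with 0 ≤ k ≤ m/2 - 1, the sum (m-2k-1)! * Σ_{p=k}^{m/2-1} (-1)^(p-k) * (m-2p-2)!! / (2^(p-k) * (m-2p-1)! * (p-k)!) equals (-1)^(m/2 - k - 1) * (m-2k-3)!!. -/
/-!
With `N = m/2 - k - 1` and the reflected index `i = m/2 - 1 - p`, the identities
`(2i+1)! = (2i+1)‼ (2i)‼` and `(2i+1)‼ = 2^(i+1) (1/2)(3/2)⋯(i+1/2)` turn the sum into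
`∑ᵢ (-1)^i N(N-1)⋯(N-i+1) / (a(a+1)⋯(a+i))` at `a = 1/2`, up to an explicit factor.
This is the partial fraction expansion of `1/(a+N)`, proved by induction on `N` with `a` shifted to
`a + 1`.
-/

open Finset
open scoped Nat

theorem Finset.sum_Icc_add_eq_sum_range_reflect {M : Type*} [AddCommMonoid M] (f : ℕ → M)
    (k N : ℕ) : ∑ p ∈ Icc k (k + N), f p = ∑ i ∈ range (N + 1), f (k + N - i) := by
  rw [← Ico_add_one_right_eq_Icc, sum_Ico_eq_sum_range, ← sum_range_reflect]
  refine sum_congr (by congr 1; omega) fun i hi => ?_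
  rw [mem_range] at hi
  congr 1
  omega

theorem prod_range_one_half_add_eq_doubleFactorial {K : Type*} [Field K] [CharZero K] (i : ℕ) :
    ∏ t ∈ range (i + 1), (1 / 2 + (t : K)) = (2 * i + 1)‼ / 2 ^ (i + 1) := by
  induction i with
  | zero => simp
  | succ i ih =>
    rw [prod_range_succ, ih, show 2 * (i + 1) + 1 = 2 * i + 1 + 2 by ring,
      Nat.doubleFactorial_add_two]
    push_cast
    field_simp
    ring

theorem sum_range_neg_one_pow_mul_descFactorial_div_prod_add {K : Type*} [Field K] [LinearOrder K]
    [IsStrictOrderedRing K] (N : ℕ) {a : K} (ha : 0 < a) :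
    ∑ i ∈ range (N + 1), (-1) ^ i * (N.descFactorial i : K) / ∏ t ∈ range (i + 1), (a + t) =
      1 / (a + N) := by
  induction N generalizing a with
  | zero => simp
  | succ N ih =>
    have hshift : ∀ i ∈ range (N + 1),
        (-1) ^ (i + 1) * ((N + 1).descFactorial (i + 1) : K) / ∏ t ∈ range (i + 2), (a + t) =
          -(N + 1) / a * ((-1) ^ i * (N.descFactorial i : K) /
            ∏ t ∈ range (i + 1), (a + 1 + t)) := by
      intro i _
      have hprod : ∏ t ∈ range (i + 1), (a + ((t + 1 : ℕ) : K)) =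
          ∏ t ∈ range (i + 1), (a + 1 + t) :=
        prod_congr rfl fun t _ => by push_cast; ring
      have hpos : 0 < ∏ t ∈ range (i + 1), (a + 1 + (t : K)) :=
        prod_pos fun t _ => by positivity
      rw [prod_range_succ', Nat.succ_descFactorial_succ, hprod]
      push_cast
      field_simp
      ring
    rw [sum_range_succ', sum_congr rfl hshift, ← mul_sum, ih (by positivity), zero_add,
      prod_range_one, Nat.descFactorial_zero]
    have : a + 1 + N ≠ 0 := by positivity
    field_simp
    push_cast
    ring

theorem neg_one_pow_sub_mul_doubleFactorial_div_eq (N i : ℕ) (hi : i ≤ N) :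
    (-1 : ℚ) ^ (N - i) * ((2 * i)‼ : ℚ) /
        (2 ^ (N - i) * ((2 * i + 1)! : ℚ) * ((N - i)! : ℚ)) =
      (-1) ^ N / (2 ^ (N + 1) * (N ! : ℚ)) *
        ((-1) ^ i * (N.descFactorial i : ℚ) / ∏ t ∈ range (i + 1), (1 / 2 + (t : ℚ))) := by
  obtain ⟨d, rfl⟩ := Nat.exists_eq_add_of_le hi
  have hdesc : ((i + d).descFactorial i : ℚ) = (i + d)! / d ! := by
    rw [eq_div_iff (by positivity), mul_comm, ← Nat.cast_mul,
      ← Nat.factorial_mul_descFactorial hi]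
    simp
  rw [Nat.add_sub_cancel_left, Nat.factorial_eq_mul_doubleFactorial, hdesc,
    prod_range_one_half_add_eq_doubleFactorial]
  push_cast
  rcases neg_one_pow_eq_or ℚ i with hsign | hsign <;>
  · rw [pow_add, hsign]
    field_simp
    ring

theorem factorial_mul_sum_range_neg_one_pow_mul_doubleFactorial_div (N : ℕ) :
    ((2 * N + 1)! : ℚ) * ∑ i ∈ range (N + 1),
        (-1 : ℚ) ^ (N - i) * ((2 * i)‼ : ℚ) /
          (2 ^ (N - i) * ((2 * i + 1)! : ℚ) * ((N - i)! : ℚ)) =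
      (-1) ^ N * ((2 * N - 1)‼ : ℚ) := by
  rw [sum_congr rfl fun i hi =>
      neg_one_pow_sub_mul_doubleFactorial_div_eq N i (Nat.lt_succ_iff.mp (mem_range.mp hi)),
    ← mul_sum,
    sum_range_neg_one_pow_mul_descFactorial_div_prod_add N (by norm_num : (0 : ℚ) < 1 / 2),
    Nat.factorial_eq_mul_doubleFactorial, Nat.doubleFactorial_add_one, Nat.doubleFactorial_two_mul]
  push_cast
  field_simp
  ring

/-- For even `m ≥ 2` and `0 ≤ k ≤ m/2 - 1`,
`(m-2k-1)! * Σ_{p=k}^{m/2-1} (-1)^(p-k) * (m-2p-2)‼ / (2^(p-k) * (m-2p-1)! * (p-k)!)`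
equals `(-1)^(m/2-k-1) * (m-2k-3)‼`, as rational numbers. -/
theorem c_coeff_formula (m k : ℕ) (hm : Even m) (hm2 : 2 ≤ m) (hk : k ≤ m / 2 - 1) :
    (Nat.factorial (m - 2 * k - 1) : ℚ) *
        ∑ p ∈ Finset.Icc k (m / 2 - 1),
          (-1 : ℚ) ^ (p - k) * (Nat.doubleFactorial (m - 2 * p - 2) : ℚ) /
            ((2 : ℚ) ^ (p - k) * (Nat.factorial (m - 2 * p - 1) : ℚ) *
              (Nat.factorial (p - k) : ℚ)) =
      (-1 : ℚ) ^ (m / 2 - k - 1) * (Nat.doubleFactorial (m - 2 * k - 3) : ℚ) := by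
  obtain ⟨N, rfl⟩ : ∃ N, m = 2 * (k + N + 1) := by
    obtain ⟨n, rfl⟩ := hm
    exact ⟨n - k - 1, by omega⟩
  rw [show 2 * (k + N + 1) / 2 - 1 = k + N by omega, show 2 * (k + N + 1) / 2 - k - 1 = N by omega,
    show 2 * (k + N + 1) - 2 * k - 1 = 2 * N + 1 by omega,
    show 2 * (k + N + 1) - 2 * k - 3 = 2 * N - 1 by omega, sum_Icc_add_eq_sum_range_reflect,
    ← factorial_mul_sum_range_neg_one_pow_mul_doubleFactorial_div]
  refine congrArg _ (sum_congr rfl fun i hi => ?_)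
  rw [mem_range] at hi
  rw [show k + N - i - k = N - i by omega,
    show 2 * (k + N + 1) - 2 * (k + N - i) - 2 = 2 * i by omega,
    show 2 * (k + N + 1) - 2 * (k + N - i) - 1 = 2 * i + 1 by omega]
end

section
/- Let m be even and for 0 ≤ k ≤ m/2 - 1 define γ_{m,k} = (m-1)! * (-1)^(m/2-k-1) * (m-2k-3)!! / (2^k * k! * (m-1-2k)!). Then Σ_{k=0}^{m/2-1} γ_{m,k} = (m-2)!!. -/
/-!
Write `m = 2N + 2` and reverse the summation, `k = N - a`. Then
`γ_{m,N-a} = (2N+1)! / (2N)‼ * (-1)^a * C(N,a) / (2a+1)`, and the alternating sum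
`∑ (-1)^a C(N,a) / (2a+1) = (2N)‼ / (2N+1)‼` is the value at `x = 1/2` of the partial fraction
expansion `∑ (-1)^a C(N,a) / (x+a) = N! / (x (x+1) ⋯ (x+N))`. Hence the sum is
`(2N+1)! / (2N+1)‼ = (2N)‼`.
-/

open Finset Nat

theorem sum_range_succ_neg_one_pow_mul_choose_mul {R : Type*} [CommRing R] (f : ℕ → R) (n : ℕ) :
    ∑ i ∈ range (n + 2), (-1) ^ i * ((n + 1).choose i : R) * f i =
      ∑ i ∈ range (n + 1), (-1) ^ i * (n.choose i : R) * (f i - f (i + 1)) := by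
  have h := sum_choose_succ_mul (fun i _ => (-1 : R) ^ i * f i) n
  simp only [mul_sub, sum_sub_distrib]
  rw [sub_eq_add_neg, ← sum_neg_distrib]
  convert h using 2 <;> ring_nf

theorem sum_range_neg_one_pow_mul_choose_div_add {K : Type*} [Field K] (n : ℕ) (x : K)
    (hx : ∀ i ≤ n, x + i ≠ 0) :
    ∑ i ∈ range (n + 1), (-1) ^ i * (n.choose i : K) / (x + i) =
      n ! / ∏ i ∈ range (n + 1), (x + i) := by
  induction n generalizing x with
  | zero => simp
  | succ n ih =>
    have shift : ∀ i : ℕ, x + ((i + 1 : ℕ) : K) = x + 1 + i := fun i => by push_cast; ring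
    have hx₁ : ∀ i ≤ n, x + 1 + i ≠ 0 := fun i hi => shift i ▸ hx (i + 1) (by omega)
    have hprod : ∏ i ∈ range (n + 1 + 1), (x + i) = x * ∏ i ∈ range (n + 1), (x + 1 + i) := by
      rw [prod_range_succ']; simp_rw [shift]; simp only [Nat.cast_zero, add_zero]; ring
    have hprod' : ∏ i ∈ range (n + 1 + 1), (x + i) =
        (∏ i ∈ range (n + 1), (x + i)) * (x + (n + 1 : ℕ)) := prod_range_succ _ _
    have hP : ∏ i ∈ range (n + 1), (x + i) ≠ 0 :=
      prod_ne_zero_iff.2 fun i hi => hx i (by simp at hi; omega)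
    have hQ : ∏ i ∈ range (n + 1), (x + 1 + i) ≠ 0 :=
      prod_ne_zero_iff.2 fun i hi => hx₁ i (by simp at hi; omega)
    have hx₀ : x ≠ 0 := by simpa using hx 0 (Nat.zero_le _)
    simp_rw [div_eq_mul_inv _ (x + _)]
    rw [sum_range_succ_neg_one_pow_mul_choose_mul]
    simp only [mul_sub, sum_sub_distrib, ← div_eq_mul_inv, shift]
    rw [ih x fun i hi => hx i (by omega), ih (x + 1) hx₁, hprod]
    rw [hprod] at hprod'
    field_simp
    push_cast [Nat.factorial_succ] at hprod' ⊢
    linear_combination (n ! : K) * hprod'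

theorem sum_range_neg_one_pow_mul_choose_div_two_mul_add_one {K : Type*} [Field K] [CharZero K]
    (n : ℕ) :
    ∑ i ∈ range (n + 1), (-1) ^ i * (n.choose i : K) / (2 * i + 1) = (2 * n)‼ / (2 * n + 1)‼ := by
  have half_add : ∀ i : ℕ, (2 : K)⁻¹ + i = ((2 * i + 1 : ℕ) : K) / 2 := fun i => by push_cast; ring
  have hodd : ((2 * n + 1)‼ : K) = ∏ i ∈ range (n + 1), ((2 * i + 1 : ℕ) : K) := by
    rw [doubleFactorial_eq_prod_odd, prod_range_succ']
    push_cast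
    ring
  have hodd₀ : ((2 * n + 1)‼ : K) ≠ 0 := Nat.cast_ne_zero.2 (doubleFactorial_pos _).ne'
  have h := sum_range_neg_one_pow_mul_choose_div_add n (2 : K)⁻¹ fun i _ => by
    rw [half_add]
    exact div_ne_zero (Nat.cast_ne_zero.2 (by omega)) two_ne_zero
  simp_rw [half_add, prod_div_distrib, prod_const, card_range, ← hodd] at h
  simp_rw [show ∀ i : ℕ, (2 * i + 1 : K) = 2 * (2⁻¹ + i) by intro; ring, mul_comm (2 : K),
    ← div_div, ← sum_div, half_add, h, doubleFactorial_two_mul]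
  push_cast
  field_simp
  ring

/-- At `k = m/2 - 1` the truncated subtraction gives `(m - 2k - 3)‼ = 0‼ = 1`, matching the
convention `(-1)‼ = 1`. -/
def gamma (m k : ℕ) : ℚ :=
  (m - 1)! * (-1) ^ (m / 2 - k - 1) * (m - 2 * k - 3)‼ / (2 ^ k * k ! * (m - 1 - 2 * k)!)

theorem factorial_two_mul_add_one (a : ℕ) :
    (2 * a + 1)! = (2 * a + 1) * (2 * a - 1)‼ * (2 ^ a * a !) := by
  rw [factorial_eq_mul_doubleFactorial, doubleFactorial_add_one, doubleFactorial_two_mul]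

theorem gamma_two_mul_add_two {N a : ℕ} (ha : a ≤ N) :
    gamma (2 * N + 2) (N - a) =
      (2 * N + 1)! / (2 * N)‼ * ((-1) ^ a * (N.choose a : ℚ) / (2 * a + 1)) := by
  have h₀ : 2 * N + 2 - 1 = 2 * N + 1 := by omega
  have h₁ : (2 * N + 2) / 2 - (N - a) - 1 = a := by omega
  have h₂ : 2 * N + 2 - 2 * (N - a) - 3 = 2 * a - 1 := by omega
  have h₃ : 2 * N + 1 - 2 * (N - a) = 2 * a + 1 := by omega
  have h₄ : (2 : ℚ) ^ N = 2 ^ (N - a) * 2 ^ a := by rw [← pow_add, Nat.sub_add_cancel ha]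
  rw [gamma, h₀, h₁, h₂, h₃, factorial_two_mul_add_one a, doubleFactorial_two_mul,
    Nat.cast_choose ℚ ha]
  push_cast
  rw [h₄]
  field_simp

/-- For even `m ≥ 2`, with
`γ_{m,k} = (m-1)! * (-1)^(m/2-k-1) * (m-2k-3)‼ / (2^k * k! * (m-1-2k)!)`,
one has `Σ_{k=0}^{m/2-1} γ_{m,k} = (m-2)‼`, as rational numbers. -/
theorem gamma_sum (m : ℕ) (hm : Even m) (hm2 : 2 ≤ m) :
    ∑ k ∈ Finset.range (m / 2),
        (Nat.factorial (m - 1) : ℚ) * (-1 : ℚ) ^ (m / 2 - k - 1) *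
          (Nat.doubleFactorial (m - 2 * k - 3) : ℚ) /
            ((2 : ℚ) ^ k * (Nat.factorial k : ℚ) * (Nat.factorial (m - 1 - 2 * k) : ℚ)) =
      (Nat.doubleFactorial (m - 2) : ℚ) := by
  obtain ⟨N, rfl⟩ : ∃ N, m = 2 * N + 2 := ⟨m / 2 - 1, by rw [Nat.even_iff] at hm; omega⟩
  change ∑ k ∈ range ((2 * N + 2) / 2), gamma (2 * N + 2) k = _
  rw [show (2 * N + 2) / 2 = N + 1 by omega, show 2 * N + 2 - 2 = 2 * N by omega,
    ← sum_range_reflect]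
  calc ∑ j ∈ range (N + 1), gamma (2 * N + 2) (N + 1 - 1 - j)
      = (2 * N + 1)! / (2 * N)‼ *
          ∑ a ∈ range (N + 1), (-1) ^ a * (N.choose a : ℚ) / (2 * a + 1) := by
        rw [mul_sum]
        exact sum_congr rfl fun a ha => gamma_two_mul_add_two (by simp at ha; omega)
    _ = (2 * N)‼ := by
        rw [sum_range_neg_one_pow_mul_choose_div_two_mul_add_one, factorial_eq_mul_doubleFactorial]
        push_cast
        field_simp
end

section
/- For an even natural number m, the Gauss–Bonnet density of a Riemannian manifold of constant sectional curvature a equals (a/2)^(m/2) * m!/((m/2)!). Concretely: if R = (a/2) * (g ⊘ g) as a (2,2)-double form on an m-dimensional inner product space, then (1/(m! * (m/2)!)) * C^m(R^(m/2)) = (a/2)^(m/2) * m!/((m/2)!), where C^m denotes the full contraction and powers are taken with respect to the double wedge product. -/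
open Finset

namespace GaussBonnet

/-- Components, with respect to a fixed orthonormal basis indexed by `Fin n`, of a
`(k,l)`-double form on an `n`-dimensional real inner product space: an element of
`Λ^k V* ⊗ Λ^l V*` is determined by its components. -/
def DF (n k l : ℕ) : Type := (Fin k → Fin n) → (Fin l → Fin n) → ℝ

variable {n : ℕ}

/-- The double wedge product of double forms, given by the standard
antisymmetrization formula. -/
noncomputable def dmul {k l p q : ℕ} (ψ₁ : DF n k l) (ψ₂ : DF n p q) : DF n (k + p) (l + q) :=
  fun X Y =>
    (1 / ((Nat.factorial k * Nat.factorial l * Nat.factorial p * Nat.factorial q : ℕ) : ℝ)) *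
      ∑ σ : Equiv.Perm (Fin (k + p)), ∑ τ : Equiv.Perm (Fin (l + q)),
        ((Equiv.Perm.sign σ : ℤ) : ℝ) * ((Equiv.Perm.sign τ : ℤ) : ℝ) *
          ψ₁ (fun i => X (σ (Fin.castAdd p i))) (fun j => Y (τ (Fin.castAdd q j))) *
          ψ₂ (fun i => X (σ (Fin.natAdd k i))) (fun j => Y (τ (Fin.natAdd l j)))

/-- The full contraction `C^p` of a `(p,p)`-double form, obtained by iterating `p`
times the contraction operator `C(ψ)(X's; Y's) = Σᵢ ψ(X's, eᵢ; Y's, eᵢ)` over an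
orthonormal basis; it equals the sum of the diagonal components. -/
noncomputable def fullContr {p : ℕ} (ψ : DF n p p) : ℝ := ∑ f : Fin p → Fin n, ψ f f

/-- The metric tensor `g`, viewed as a `(1,1)`-double form (components `δᵢⱼ` in an
orthonormal basis). -/
noncomputable def gDF (n : ℕ) : DF n 1 1 := fun X Y => if X 0 = Y 0 then 1 else 0

/-- Powers of a `(k,k)`-double form with respect to the double wedge product. -/
noncomputable def dpow {k : ℕ} (ψ : DF n k k) : ∀ q : ℕ, DF n (k * q) (k * q)
  | 0 => fun _ _ => 1
  | q + 1 => dmul (dpow ψ q) ψ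

/-- A double form is alternating in each of its two groups of arguments. -/
def IsAlt {k l : ℕ} (ψ : DF n k l) : Prop :=
  ∀ (σ : Equiv.Perm (Fin k)) (τ : Equiv.Perm (Fin l)) (X : Fin k → Fin n) (Y : Fin l → Fin n),
    ψ (X ∘ σ) (Y ∘ τ) = ((Equiv.Perm.sign σ : ℤ) : ℝ) * ((Equiv.Perm.sign τ : ℤ) : ℝ) * ψ X Y

end GaussBonnet

open GaussBonnet

/-!
Let `δₚ` be the generalized Kronecker delta, the `(p,p)`-double form whose components are the
determinants `det (δ_{Xᵢ Yⱼ})`. Expanding both determinants in `δₖ ⊘ δₚ` and reindexing the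
permutations (a Laplace expansion) gives `δₖ ⊘ δₚ = ((k+p)!/(k! p!)) δₖ₊ₚ`. As `g = δ₁`, this makes
`R = a δ₂` and `Rʰ = (a/2)ʰ (2h)! δ₂ₕ`. The full contraction of `δₚ` counts the injective maps
`Fin p → Fin m`, so it is `m!/(m-p)!`, which is `m!` for `p = m = 2h`.
-/

namespace GaussBonnet

open Equiv Matrix

section Determinants

variable {R : Type*} [CommRing R]

theorem sum_sign_mul_sign_mul_of_sum_sign_mul {N : ℕ} (F : Perm (Fin N) → Perm (Fin N) → R)
    (c : R) (hF : ∀ τ, ∑ σ, ((Perm.sign σ : ℤ) : R) * F σ τ = (Perm.sign τ : ℤ) * c) :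
    ∑ σ, ∑ τ, ((Perm.sign σ : ℤ) : R) * ((Perm.sign τ : ℤ) : R) * F σ τ = N.factorial * c := by
  have hsq : ∀ τ : Perm (Fin N), ((Perm.sign τ : ℤ) : R) * ((Perm.sign τ : ℤ) : R) = 1 :=
    fun τ => by rw [← Int.cast_mul, ← Units.val_mul, Int.units_mul_self, Units.val_one, Int.cast_one]
  calc _ = ∑ τ : Perm (Fin N), ((Perm.sign τ : ℤ) : R) * ((Perm.sign τ : ℤ) : R) * c := by
        rw [sum_comm]
        refine sum_congr rfl fun τ _ => ?_
        rw [mul_assoc, ← hF, mul_sum]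
        exact sum_congr rfl fun σ _ => by ring
    _ = N.factorial * c := by
        simp only [hsq, one_mul, sum_const, card_univ, Fintype.card_perm, Fintype.card_fin,
          nsmul_eq_mul]

/-- `π` on the first `k` entries of `Fin (k + p)`, `ρ` on the last `p`. -/
def finAddPerm {k p : ℕ} (π : Perm (Fin k)) (ρ : Perm (Fin p)) : Perm (Fin (k + p)) :=
  finSumFinEquiv.permCongr (Equiv.sumCongr π ρ)

@[simp]
theorem finAddPerm_castAdd {k p : ℕ} (π : Perm (Fin k)) (ρ : Perm (Fin p)) (i : Fin k) :
    finAddPerm π ρ (Fin.castAdd p i) = Fin.castAdd p (π i) := by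
  simp [finAddPerm, permCongr_apply]

@[simp]
theorem finAddPerm_natAdd {k p : ℕ} (π : Perm (Fin k)) (ρ : Perm (Fin p)) (j : Fin p) :
    finAddPerm π ρ (Fin.natAdd k j) = Fin.natAdd k (ρ j) := by
  simp [finAddPerm, permCongr_apply]

@[simp]
theorem sign_finAddPerm {k p : ℕ} (π : Perm (Fin k)) (ρ : Perm (Fin p)) :
    Perm.sign (finAddPerm π ρ) = Perm.sign π * Perm.sign ρ := by
  simp [finAddPerm]

theorem det_mul_det_eq_sum_finAddPerm {k p : ℕ} (A : Matrix (Fin (k + p)) (Fin (k + p)) R) :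
    (A.submatrix (Fin.castAdd p) (Fin.castAdd p)).det *
        (A.submatrix (Fin.natAdd k) (Fin.natAdd k)).det =
      ∑ π : Perm (Fin k), ∑ ρ : Perm (Fin p),
        ((Perm.sign (finAddPerm π ρ) : ℤ) : R) * ∏ z, A (finAddPerm π ρ z) z := by
  rw [det_apply', det_apply', sum_mul_sum]
  refine sum_congr rfl fun π _ => sum_congr rfl fun ρ _ => ?_
  rw [Fin.prod_univ_add, sign_finAddPerm, Units.val_mul, Int.cast_mul]
  simp only [finAddPerm_castAdd, finAddPerm_natAdd, submatrix_apply]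
  ring

/-- Laplace expansion along the first `k` columns, each choice of `k` rows being counted
`k! p!` times. -/
theorem sum_sign_mul_det_mul_det {k p : ℕ} (M : Matrix (Fin (k + p)) (Fin (k + p)) R) :
    ∑ σ : Perm (Fin (k + p)), ((Perm.sign σ : ℤ) : R) *
        ((M.submatrix (σ ∘ Fin.castAdd p) (Fin.castAdd p)).det *
          (M.submatrix (σ ∘ Fin.natAdd k) (Fin.natAdd k)).det) =
      k.factorial * p.factorial * M.det := by
  have hσ : ∀ σ : Perm (Fin (k + p)),
      ((Perm.sign σ : ℤ) : R) *
          ((M.submatrix (σ ∘ Fin.castAdd p) (Fin.castAdd p)).det *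
            (M.submatrix (σ ∘ Fin.natAdd k) (Fin.natAdd k)).det) =
        ∑ π : Perm (Fin k), ∑ ρ : Perm (Fin p),
          ((Perm.sign (σ * finAddPerm π ρ) : ℤ) : R) * ∏ z, M ((σ * finAddPerm π ρ) z) z := by
    intro σ
    rw [show M.submatrix (σ ∘ Fin.castAdd p) (Fin.castAdd p) =
        (M.submatrix σ id).submatrix (Fin.castAdd p) (Fin.castAdd p) from rfl,
      show M.submatrix (σ ∘ Fin.natAdd k) (Fin.natAdd k) =
        (M.submatrix σ id).submatrix (Fin.natAdd k) (Fin.natAdd k) from rfl,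
      det_mul_det_eq_sum_finAddPerm, mul_sum]
    refine sum_congr rfl fun π _ => ?_
    rw [mul_sum]
    refine sum_congr rfl fun ρ _ => ?_
    simp only [Perm.sign_mul, Units.val_mul, Int.cast_mul, Perm.mul_apply, submatrix_apply,
      id_eq]
    ring
  have hπρ : ∀ (π : Perm (Fin k)) (ρ : Perm (Fin p)),
      ∑ σ : Perm (Fin (k + p)),
          ((Perm.sign (σ * finAddPerm π ρ) : ℤ) : R) * ∏ z, M ((σ * finAddPerm π ρ) z) z =
        M.det := fun π ρ => by
    rw [det_apply']
    exact Fintype.sum_equiv (Equiv.mulRight (finAddPerm π ρ)) _ _ fun _ => rfl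
  simp_rw [hσ]
  rw [sum_comm]
  simp_rw [sum_comm (γ := Perm (Fin (k + p))), hπρ, sum_const, card_univ, Fintype.card_perm,
    Fintype.card_fin, nsmul_eq_mul]
  ring

theorem sum_sign_mul_sign_mul_det_mul_det {k p : ℕ} (M : Matrix (Fin (k + p)) (Fin (k + p)) R) :
    ∑ σ : Perm (Fin (k + p)), ∑ τ : Perm (Fin (k + p)),
      ((Perm.sign σ : ℤ) : R) * ((Perm.sign τ : ℤ) : R) *
        ((M.submatrix (σ ∘ Fin.castAdd p) (τ ∘ Fin.castAdd p)).det *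
          (M.submatrix (σ ∘ Fin.natAdd k) (τ ∘ Fin.natAdd k)).det) =
      (k + p).factorial * (k.factorial * p.factorial * M.det) := by
  refine sum_sign_mul_sign_mul_of_sum_sign_mul _ _ fun τ => ?_
  rw [mul_left_comm, ← det_permute', ← sum_sign_mul_det_mul_det]
  simp only [submatrix_submatrix, Function.id_comp]

end Determinants

variable {n : ℕ}

/-- The generalized Kronecker delta `det (δ_{X i, Y j})`. -/
noncomputable def kroneckerDelta (n p : ℕ) : DF n p p :=
  fun X Y => ((1 : Matrix (Fin n) (Fin n) ℝ).submatrix X Y).det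

theorem dmul_const_mul {k l p q : ℕ} (c d : ℝ) (ψ : DF n k l) (φ : DF n p q) :
    dmul (fun X Y => c * ψ X Y) (fun X Y => d * φ X Y) = fun X Y => c * d * dmul ψ φ X Y := by
  funext X Y
  simp only [dmul, mul_sum]
  exact sum_congr rfl fun σ _ => sum_congr rfl fun τ _ => by ring

theorem dmul_kroneckerDelta (k p : ℕ) :
    dmul (kroneckerDelta n k) (kroneckerDelta n p) = fun X Y =>
      ((k + p).factorial / (k.factorial * p.factorial) : ℝ) * kroneckerDelta n (k + p) X Y := by
  funext X Y
  have hk : (k.factorial : ℝ) ≠ 0 := by positivity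
  have hp : (p.factorial : ℝ) ≠ 0 := by positivity
  have := sum_sign_mul_sign_mul_det_mul_det ((1 : Matrix (Fin n) (Fin n) ℝ).submatrix X Y)
  simp only [submatrix_submatrix, Function.comp_def] at this
  simp only [dmul, kroneckerDelta]
  rw [sum_congr rfl fun σ _ => sum_congr rfl fun τ _ => mul_assoc _ _ _, this]
  push_cast
  field_simp

theorem gDF_eq_kroneckerDelta : gDF n = kroneckerDelta n 1 := by
  funext X Y
  simp [gDF, kroneckerDelta, one_apply]

theorem dmul_gDF_gDF : dmul (gDF n) (gDF n) = fun X Y => 2 * kroneckerDelta n 2 X Y := by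
  rw [gDF_eq_kroneckerDelta, dmul_kroneckerDelta]
  norm_num
  rfl

theorem dpow_const_mul_kroneckerDelta_two (a : ℝ) (h : ℕ) :
    dpow (fun X Y => a * kroneckerDelta n 2 X Y) h =
      fun X Y => (a / 2) ^ h * (2 * h).factorial * kroneckerDelta n (2 * h) X Y := by
  induction h with
  | zero =>
    funext X Y
    simp [dpow, kroneckerDelta]
  | succ h ih =>
    show dmul (dpow _ h) _ = _
    rw [ih, dmul_const_mul, dmul_kroneckerDelta]
    funext X Y
    have hfac : ((2 * h + 2).factorial : ℝ) = (2 * h + 2) * (2 * h + 1) * (2 * h).factorial := by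
      push_cast [Nat.factorial_succ]
      ring
    have : ((2 * h).factorial : ℝ) ≠ 0 := by positivity
    show _ = (a / 2) ^ (h + 1) * ((2 * h + 2).factorial : ℝ) * kroneckerDelta n (2 * h + 2) X Y
    rw [hfac, Nat.factorial_two]
    field_simp
    ring

theorem fullContr_const_mul {p : ℕ} (c : ℝ) (ψ : DF n p p) :
    fullContr (fun X Y => c * ψ X Y) = c * fullContr ψ :=
  (mul_sum _ _ _).symm

theorem fullContr_kroneckerDelta (p : ℕ) : fullContr (kroneckerDelta n p) = n.descFactorial p := by
  have hdiag : ∀ f : Fin p → Fin n,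
      kroneckerDelta n p f f = if Function.Injective f then 1 else 0 := fun f => by
    split_ifs with hf
    · rw [kroneckerDelta, submatrix_one _ hf, det_one]
    · obtain ⟨i, j, hfij, hij⟩ := Function.not_injective_iff.mp hf
      exact det_zero_of_row_eq hij (funext fun j' => by rw [submatrix_apply, submatrix_apply, hfij])
  simp only [fullContr, hdiag, sum_boole]
  rw [← Fintype.card_subtype, Fintype.card_congr (Equiv.subtypeInjectiveEquivEmbedding _ _),
    Fintype.card_embedding_eq, Fintype.card_fin, Fintype.card_fin]

end GaussBonnet

/-- For an even-dimensional inner product space of dimension `m`, if the curvature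
tensor is that of constant sectional curvature `a`, i.e. `R = (a/2) (g ⊘ g)` as a
`(2,2)`-double form, then the Gauss–Bonnet density
`(1/(m! (m/2)!)) C^m(R^(m/2))` equals `(a/2)^(m/2) * m!/((m/2)!)`. -/
theorem gauss_bonnet_density_space_form (m : ℕ) (hm : Even m) (a : ℝ)
    (R : DF m 2 2) (hR : R = fun X Y => (a / 2) * dmul (gDF m) (gDF m) X Y) :
    (1 / ((Nat.factorial m : ℝ) * (Nat.factorial (m / 2) : ℝ))) * fullContr (dpow R (m / 2)) =
      (a / 2) ^ (m / 2) * (Nat.factorial m : ℝ) / (Nat.factorial (m / 2) : ℝ) := by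
  obtain ⟨h, rfl⟩ := hm
  have hR_delta : R = fun X Y => a * kroneckerDelta (h + h) 2 X Y := by
    rw [hR, dmul_gDF_gDF]
    funext X Y
    ring
  rw [show (h + h) / 2 = h by omega, hR_delta, dpow_const_mul_kroneckerDelta_two,
    fullContr_const_mul, fullContr_kroneckerDelta, ← two_mul, Nat.descFactorial_self]
  have : ((2 * h).factorial : ℝ) ≠ 0 := by positivity
  have : (h.factorial : ℝ) ≠ 0 := by positivity
  field_simp
end

section
/- On an n-dimensional real inner product space, the full contraction of the q-th double-wedge power of the metric satisfies C^q(g^q) = n! * q! / (n-q)! = binom(n, q) * (q!)^2, for every 0 ≤ q ≤ n. -/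
open Finset

/-! A `(1,1)`-double form is a bilinear form with some matrix `A`, and its `q`-th power is
`h^q(X, Y) = q! · det (A (X i) (Y j))`. In the inductive step the antisymmetrisation over
`σ, τ` of `det (minor) · (last entry)` reproduces each term of `det` exactly `(m+1)! · m!`
times: a permutation `π` of the minor is absorbed into `σ` after extending it by the last
index. For `g` we have `A = 1`, whose `q × q` minor `(δ (f i) (f j))` has determinant `1` if
`f` is injective and `0` otherwise, so `C^q(g^q) = q! · #{f : Fin q ↪ Fin n} = q! · n!/(n-q)!`. -/

open Equiv Equiv.Perm Nat

namespace Equiv.Perm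

variable {m : ℕ}

def extendLast (π : Perm (Fin m)) : Perm (Fin (m + 1)) :=
  finSumFinEquiv.permCongr (π.sumCongr (Equiv.refl (Fin 1)))

@[simp] theorem extendLast_castSucc (π : Perm (Fin m)) (i : Fin m) :
    extendLast π i.castSucc = (π i).castSucc := by
  simp only [extendLast, permCongr_apply, finSumFinEquiv_symm_apply_castSucc, sumCongr_apply,
    coe_refl, Sum.map_inl, finSumFinEquiv_apply_left]
  rfl

@[simp] theorem extendLast_last (π : Perm (Fin m)) : extendLast π (Fin.last m) = Fin.last m := by
  simp only [extendLast, permCongr_apply, finSumFinEquiv_symm_last, sumCongr_apply, coe_refl,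
    Sum.map_inr, id_eq, finSumFinEquiv_apply_right]
  rfl

@[simp] theorem sign_extendLast (π : Perm (Fin m)) : sign (extendLast π) = sign π := by
  simp [extendLast, sign_permCongr, sign_sumCongr]

end Equiv.Perm

namespace Matrix

variable {R : Type*} [CommRing R] {m : ℕ}

theorem det_submatrix_castSucc_mul_last (C : Matrix (Fin (m + 1)) (Fin (m + 1)) R)
    (σ τ : Perm (Fin (m + 1))) :
    (C.submatrix (σ ∘ Fin.castSucc) (τ ∘ Fin.castSucc)).det * C (σ (Fin.last m)) (τ (Fin.last m)) =
      ∑ π : Perm (Fin m), ((sign π : ℤ) : R) * ∏ i, C (σ (extendLast π i)) (τ i) := by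
  rw [det_apply', Finset.sum_mul]
  refine Finset.sum_congr rfl fun π _ => ?_
  simp [Fin.prod_univ_castSucc, mul_assoc]

theorem sum_sign_mul_prod_extendLast (C : Matrix (Fin (m + 1)) (Fin (m + 1)) R)
    (τ : Perm (Fin (m + 1))) (π : Perm (Fin m)) :
    ∑ σ : Perm (Fin (m + 1)), ((sign σ : ℤ) : R) * (((sign π : ℤ) : R) *
      ∏ i, C (σ (extendLast π i)) (τ i)) = ((sign τ : ℤ) : R) * C.det := by
  rw [← det_permute', det_apply']
  symm
  rw [← Equiv.sum_comp (Equiv.mulRight (extendLast π))]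
  refine Finset.sum_congr rfl fun σ _ => ?_
  simp only [coe_mulRight, Perm.sign_mul, sign_extendLast, Units.val_mul, Int.cast_mul,
    Perm.coe_mul, Function.comp_apply, submatrix_apply, id]
  ring

theorem sum_sign_mul_sign_mul_det_submatrix_castSucc (C : Matrix (Fin (m + 1)) (Fin (m + 1)) R) :
    ∑ σ : Perm (Fin (m + 1)), ∑ τ : Perm (Fin (m + 1)), ((sign σ : ℤ) : R) * ((sign τ : ℤ) : R) *
      ((C.submatrix (σ ∘ Fin.castSucc) (τ ∘ Fin.castSucc)).det *
        C (σ (Fin.last m)) (τ (Fin.last m))) = (m + 1)! * m ! * C.det := by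
  have hsq (τ : Perm (Fin (m + 1))) : ((sign τ : ℤ) : R) * ((sign τ : ℤ) : R) = 1 := by
    rw [← Int.cast_mul, ← Units.val_mul, Int.units_mul_self, Units.val_one, Int.cast_one]
  calc _ = ∑ τ : Perm (Fin (m + 1)), ∑ π : Perm (Fin m), ((sign τ : ℤ) : R) *
        ∑ σ : Perm (Fin (m + 1)), ((sign σ : ℤ) : R) * (((sign π : ℤ) : R) *
          ∏ i, C (σ (extendLast π i)) (τ i)) := by
        simp_rw [det_submatrix_castSucc_mul_last, Finset.mul_sum]
        rw [Finset.sum_comm]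
        refine Finset.sum_congr rfl fun τ _ => ?_
        rw [Finset.sum_comm]
        refine Finset.sum_congr rfl fun π _ => Finset.sum_congr rfl fun σ _ => by ring
    _ = ∑ _τ : Perm (Fin (m + 1)), ∑ _π : Perm (Fin m), C.det := by
        simp_rw [sum_sign_mul_prod_extendLast, ← mul_assoc, hsq, one_mul]
    _ = (m + 1)! * m ! * C.det := by
        simp [Fintype.card_perm, mul_assoc]

theorem det_one_submatrix {ι κ : Type*} [Fintype ι] [DecidableEq ι] [DecidableEq κ] (f : ι → κ) :
    ((1 : Matrix κ κ R).submatrix f f).det = if Function.Injective f then 1 else 0 := by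
  split_ifs with hf
  · rw [submatrix_one f hf, det_one]
  · obtain ⟨i, j, hij, hne⟩ := Function.not_injective_iff.1 hf
    exact det_zero_of_row_eq hne (funext fun k => by rw [submatrix_apply, submatrix_apply, hij])

end Matrix

namespace GaussBonnet

variable {n : ℕ}

def DF.ofMatrix (A : Matrix (Fin n) (Fin n) ℝ) : DF n 1 1 := fun X Y => A (X 0) (Y 0)

theorem gDF_eq_ofMatrix_one (n : ℕ) : gDF n = DF.ofMatrix 1 := by
  funext X Y
  simp [gDF, DF.ofMatrix, Matrix.one_apply]

theorem dpow_ofMatrix_apply (A : Matrix (Fin n) (Fin n) ℝ) (q : ℕ) (X Y : Fin (1 * q) → Fin n) :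
    dpow (DF.ofMatrix A) q X Y = q ! * (A.submatrix X Y).det := by
  induction q with
  | zero => simp [dpow]
  | succ q ih =>

    let C : Matrix (Fin (1 * q + 1)) (Fin (1 * q + 1)) ℝ := A.submatrix X Y
    have h1 : ((1 * q + 1)! : ℝ) = (q + 1)! := by rw [one_mul]
    have h2 : ((1 * q)! : ℝ) = q ! := by rw [one_mul]
    calc dpow (DF.ofMatrix A) (q + 1) X Y
        = 1 / (((1 * q)! * (1 * q)! * 1 ! * 1 ! : ℕ) : ℝ) *
            ∑ σ : Perm (Fin (1 * q + 1)), ∑ τ : Perm (Fin (1 * q + 1)),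
              ((sign σ : ℤ) : ℝ) * ((sign τ : ℤ) : ℝ) *
                (q ! * (C.submatrix (σ ∘ Fin.castSucc) (τ ∘ Fin.castSucc)).det) *
                C (σ (Fin.last (1 * q))) (τ (Fin.last (1 * q))) := by
          simp only [dpow, dmul, ih]
          rfl
      _ = 1 / (q ! * q !) * (q ! * ((1 * q + 1)! * (1 * q)! * C.det)) := by
          rw [← Matrix.sum_sign_mul_sign_mul_det_submatrix_castSucc, Finset.mul_sum]
          simp only [Finset.mul_sum, Nat.cast_mul, h2, Nat.factorial_one, mul_one]
          refine Finset.sum_congr rfl fun σ _ => Finset.sum_congr rfl fun τ _ => by ring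
      _ = (q + 1)! * C.det := by
          rw [h1, h2]
          field_simp

theorem fullContr_dpow_gDF (n q : ℕ) : fullContr (dpow (gDF n) q) = q ! * n.descFactorial q := by
  simp only [fullContr, gDF_eq_ofMatrix_one, dpow_ofMatrix_apply, Matrix.det_one_submatrix,
    ← Finset.mul_sum, Finset.sum_boole]
  congr 2
  rw [← Fintype.card_subtype, Fintype.card_congr (Equiv.subtypeInjectiveEquivEmbedding _ _),
    Fintype.card_embedding_eq, Fintype.card_fin, Fintype.card_fin, one_mul]

end GaussBonnet

open GaussBonnet

/-- On an `n`-dimensional real inner product space, the full contraction of the `q`-th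
double-wedge power of the metric satisfies
`C^q(g^q) = n! q!/(n-q)! = binom(n,q) (q!)^2`, for `0 ≤ q ≤ n`. -/
theorem fullContr_g_pow (n q : ℕ) (hq : q ≤ n) :
    fullContr (dpow (gDF n) q) =
        (Nat.factorial n : ℝ) * (Nat.factorial q : ℝ) / (Nat.factorial (n - q) : ℝ) ∧
      fullContr (dpow (gDF n) q) = (Nat.choose n q : ℝ) * (Nat.factorial q : ℝ) ^ 2 := by
  rw [fullContr_dpow_gDF]
  constructor
  · rw [eq_div_iff (by positivity), ← Nat.factorial_mul_descFactorial hq]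
    push_cast
    ring
  · rw [Nat.descFactorial_eq_factorial_mul_choose]
    push_cast
    ring
end
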